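/- Radical parallelism on the projective line over a ring is an equivalence relation: it is reflexive, symmetric, and transitive. -/

import Mathlib

open Matrix

/-- A pair `(a, b)` is admissible if it is the first row of an invertible 2×2 matrix. -/
def Admissible {R : Type*} [Ring R] (a b : R) : Prop :=
  ∃ M : Matrix (Fin 2) (Fin 2) R, IsUnit M ∧ M 0 0 = a ∧ M 0 1 = b

/-- The point `R(a,b)` of the projective line over `R`. -/
def pt (R : Type*) [Ring R] (a b : R) : Submodule R (Fin 2 → R) :=
  Submodule.span R {![a, b]}

/-- The projective line over `R`. -/
def ProjLine (R : Type*) [Ring R] : Set (Submodule R (Fin 2 → R)) :=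
  {p | ∃ a b : R, Admissible a b ∧ p = pt R a b}

/-- Two points are distant iff representing admissible pairs form an invertible matrix. -/
def Distant {R : Type*} [Ring R] (p q : Submodule R (Fin 2 → R)) : Prop :=
  ∃ a b c d : R, p = pt R a b ∧ q = pt R c d ∧ IsUnit (!![a, b; c, d])

/-- `p` is radically parallel to `q`: every point distant to `p` is distant to `q`. -/
def RadParallel {R : Type*} [Ring R] (p q : Submodule R (Fin 2 → R)) : Prop :=
  ∀ x ∈ ProjLine R, Distant x p → Distant x q

/-!
A point of `P(R)` is the span of a row of an invertible matrix, and such a row is determined by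
the point up to a unit factor, so `p ∥ q` can be read off representative rows `v`, `w`: every row
`r` with `(r; v)` invertible has `(r; w)` invertible. This relation is invariant under right
multiplication by `GL₂(R)`, which moves `v` to `(1, 0)`. Testing with the rows `(0, 1)` and
`(t, 1)`, which are distant to `(1, 0)`, shows that `w = c • (1, y)` with `c` a unit and `y` in the
Jacobson radical. Then `(e, f)` is distant to `(1, y)` iff `f - e y` is a unit, iff `f` is a unit,
iff `(e, f)` is distant to `(1, 0)`.
-/

theorem of_rows_eq {α : Type*} (v w : Fin 2 → α) : of ![v, w] = !![v 0, v 1; w 0, w 1] :=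
  eta_fin_two _

section

variable {R : Type*} [Ring R]

open Submodule

def shearUnit (t : R) : (Matrix (Fin 2) (Fin 2) R)ˣ where
  val := !![1, t; 0, 1]
  inv := !![1, -t; 0, 1]
  val_inv := by simp [one_fin_two]
  inv_val := by simp [one_fin_two]

def swapUnit : (Matrix (Fin 2) (Fin 2) R)ˣ where
  val := !![0, 1; 1, 0]
  inv := !![0, 1; 1, 0]
  val_inv := by simp [one_fin_two]
  inv_val := by simp [one_fin_two]

theorem isUnit_fin_two_diag_iff {a d : R} : IsUnit !![a, 0; 0, d] ↔ IsUnit a ∧ IsUnit d := by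
  simp only [isUnit_iff_exists]
  constructor
  · rintro ⟨B, hAB, hBA⟩
    rw [eta_fin_two B, mul_fin_two, one_fin_two] at hAB hBA
    simp only [zero_mul, mul_zero, add_zero, zero_add, EmbeddingLike.apply_eq_iff_eq, vecCons_inj,
      and_true] at hAB hBA
    exact ⟨⟨B 0 0, hAB.1.1, hBA.1.1⟩, ⟨B 1 1, hAB.2.2, hBA.2.2⟩⟩
  · rintro ⟨⟨a', ha, ha'⟩, ⟨d', hd, hd'⟩⟩
    exact ⟨!![a', 0; 0, d'], by simp [ha, hd, one_fin_two], by simp [ha', hd', one_fin_two]⟩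

theorem of_rows_mul (v w : Fin 2 → R) (G : Matrix (Fin 2) (Fin 2) R) :
    of ![v, w] * G = of ![v ᵥ* G, w ᵥ* G] := by
  ext i j
  fin_cases i <;> rfl

theorem isUnit_of_rows_comm {v w : Fin 2 → R} :
    IsUnit (of ![v, w]) ↔ IsUnit (of ![w, v]) := by
  rw [← Units.isUnit_units_mul swapUnit, of_rows_eq v, of_rows_eq w]
  simp [swapUnit]

theorem isUnit_of_smul_rows {a b : R} (ha : IsUnit a) (hb : IsUnit b) (v w : Fin 2 → R) :
    IsUnit (of ![a • v, b • w]) ↔ IsUnit (of ![v, w]) := by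
  obtain ⟨D, hD⟩ := isUnit_fin_two_diag_iff.mpr ⟨ha, hb⟩
  rw [← Units.isUnit_units_mul D (of ![v, w]), hD, of_rows_eq v, of_rows_eq (a • v)]
  simp

theorem isUnit_fin_two_swap_iff {a b c d : R} : IsUnit !![a, b; c, d] ↔ IsUnit !![d, c; b, a] := by
  rw [← Units.isUnit_units_mul swapUnit, ← Units.isUnit_mul_units _ swapUnit]
  simp [swapUnit]

theorem isUnit_fin_two_iff_of_unit_bottom_left (a b d : R) (c : Rˣ) :
    IsUnit !![a, b; c, d] ↔ IsUnit (b - a * c⁻¹ * d) := by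
  have hfactor : !![a, b; c, d] = (shearUnit (a * ↑c⁻¹) : Matrix (Fin 2) (Fin 2) R) *
      (swapUnit (R := R) : Matrix (Fin 2) (Fin 2) R) * !![(c : R), 0; 0, b - a * ↑c⁻¹ * d] *
      (shearUnit (↑c⁻¹ * d) : Matrix (Fin 2) (Fin 2) R) := by
    simp [shearUnit, swapUnit, mul_assoc]
  rw [hfactor, Units.isUnit_mul_units, mul_assoc, Units.isUnit_units_mul, Units.isUnit_units_mul,
    isUnit_fin_two_diag_iff]
  simp

theorem isUnit_of_isUnit_sub_mul {a b y : R} (hy : ∀ t, IsUnit (1 - t * y))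
    (h : IsUnit (b - a * y)) : IsUnit b := by
  obtain ⟨u, hu⟩ := h
  have : b = u * (1 - -(↑u⁻¹ * a) * y) := by
    rw [neg_mul, sub_neg_eq_add, mul_add, mul_one, ← mul_assoc, ← mul_assoc, Units.mul_inv, one_mul,
      hu, sub_add_cancel]
  rw [this]
  exact u.isUnit.mul (hy _)

def AdmissibleRow (v : Fin 2 → R) : Prop :=
  ∃ w, IsUnit (of ![v, w])

theorem AdmissibleRow.of_isUnit_rows {v w : Fin 2 → R} (h : IsUnit (of ![v, w])) :
    AdmissibleRow w :=
  ⟨v, isUnit_of_rows_comm.mp h⟩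

theorem AdmissibleRow.smul_left_injective {v : Fin 2 → R} (hv : AdmissibleRow v) :
    Function.Injective (fun a : R => a • v) := by
  obtain ⟨w, U, hU⟩ := hv
  set c : Fin 2 → R := fun j => (↑U⁻¹ : Matrix (Fin 2) (Fin 2) R) j 0
  have hc : v ⬝ᵥ c = 1 := by
    have := congr_fun₂ U.mul_inv 0 0
    rwa [mul_apply', hU] at this
  intro a b hab
  calc a = (a • v) ⬝ᵥ c := by rw [smul_dotProduct, hc, smul_eq_mul, mul_one]
    _ = (b • v) ⬝ᵥ c := congr_arg (· ⬝ᵥ c) hab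
    _ = b := by rw [smul_dotProduct, hc, smul_eq_mul, mul_one]

theorem AdmissibleRow.exists_isUnit_smul_eq {v w : Fin 2 → R} (hv : AdmissibleRow v)
    (hw : AdmissibleRow w) (h : span R {v} = span R {w}) : ∃ u : R, IsUnit u ∧ u • v = w := by
  obtain ⟨r, hr⟩ := mem_span_singleton.mp (h ▸ mem_span_singleton_self w : w ∈ span R {v})
  obtain ⟨s, hs⟩ := mem_span_singleton.mp (h ▸ mem_span_singleton_self v : v ∈ span R {w})
  have hsr : s * r = 1 := hv.smul_left_injective (by simp [mul_smul, hr, hs])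
  have hrs : r * s = 1 := hw.smul_left_injective (by simp [mul_smul, hr, hs])
  exact ⟨r, ⟨⟨r, s, hrs, hsr⟩, rfl⟩, hr⟩

theorem pt_eq_span (v : Fin 2 → R) : pt R (v 0) (v 1) = span R {v} := by
  rw [pt]
  congr
  ext i
  fin_cases i <;> rfl

theorem mem_projLine_iff {p : Submodule R (Fin 2 → R)} :
    p ∈ ProjLine R ↔ ∃ v, AdmissibleRow v ∧ p = span R {v} := by
  constructor
  · rintro ⟨a, b, ⟨M, hM, rfl, rfl⟩, rfl⟩
    refine ⟨_, ⟨M 1, ?_⟩, rfl⟩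
    convert hM
    ext i j
    fin_cases i <;> fin_cases j <;> rfl
  · rintro ⟨v, ⟨w, hw⟩, rfl⟩
    exact ⟨v 0, v 1, ⟨_, hw, rfl, rfl⟩, (pt_eq_span v).symm⟩

theorem distant_span_iff {v w : Fin 2 → R} (hv : AdmissibleRow v) (hw : AdmissibleRow w) :
    Distant (span R {v}) (span R {w}) ↔ IsUnit (of ![v, w]) := by
  constructor
  · rintro ⟨a, b, c, d, hab, hcd, hU⟩
    obtain ⟨s, hs, hsv⟩ := hv.exists_isUnit_smul_eq ⟨_, hU⟩ hab
    obtain ⟨t, ht, htw⟩ := hw.exists_isUnit_smul_eq (.of_isUnit_rows hU) hcd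
    change IsUnit (of ![![a, b], ![c, d]]) at hU
    rwa [← hsv, ← htw, isUnit_of_smul_rows hs ht] at hU
  · intro h
    exact ⟨v 0, v 1, w 0, w 1, (pt_eq_span v).symm, (pt_eq_span w).symm, by rwa [← of_rows_eq]⟩

def RowParallel (v w : Fin 2 → R) : Prop :=
  ∀ r, IsUnit (of ![r, v]) → IsUnit (of ![r, w])

theorem radParallel_span_iff {v w : Fin 2 → R} (hv : AdmissibleRow v) (hw : AdmissibleRow w) :
    RadParallel (span R {v}) (span R {w}) ↔ RowParallel v w := by
  constructor
  · intro h r hr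
    have hr' : AdmissibleRow r := ⟨v, hr⟩
    exact (distant_span_iff hr' hw).mp
      (h _ (mem_projLine_iff.mpr ⟨r, hr', rfl⟩) ((distant_span_iff hr' hv).mpr hr))
  · intro h x hx hxv
    obtain ⟨r, hr, rfl⟩ := mem_projLine_iff.mp hx
    rw [distant_span_iff hr hv] at hxv
    exact (distant_span_iff hr hw).mpr (h r hxv)

theorem RowParallel.vecMul {v w : Fin 2 → R} (h : RowParallel v w)
    (G : (Matrix (Fin 2) (Fin 2) R)ˣ) : RowParallel (v ᵥ* G) (w ᵥ* G) := by
  intro r hr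
  have hr' : r = r ᵥ* G⁻¹.val ᵥ* G.val := by rw [vecMul_vecMul, Units.inv_mul, vecMul_one]
  rw [hr', ← of_rows_mul, Units.isUnit_mul_units] at hr ⊢
  exact h _ hr

theorem RowParallel.symm_of_left_eq_one_zero {w : Fin 2 → R} (h : RowParallel ![1, 0] w) :
    RowParallel w ![1, 0] := by
  have hdistant : ∀ r : Fin 2 → R, IsUnit (r 1) → IsUnit (of ![r, ![1, 0]]) := by
    intro r hr
    rw [of_rows_eq]
    simpa using (isUnit_fin_two_iff_of_unit_bottom_left (r 0) (r 1) 0 1).mpr (by simpa using hr)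
  obtain ⟨c, hc⟩ : IsUnit (w 0) := by
    have := h ![0, 1] (hdistant _ isUnit_one)
    rw [of_rows_eq, isUnit_fin_two_swap_iff] at this
    simpa using (isUnit_fin_two_iff_of_unit_bottom_left (w 1) (w 0) 0 1).mp (by simpa using this)
  have hy : ∀ t, IsUnit (1 - t * (↑c⁻¹ * w 1)) := fun t => by
    have := h ![t, 1] (hdistant _ isUnit_one)
    rw [of_rows_eq, ← hc, isUnit_fin_two_iff_of_unit_bottom_left] at this
    simpa [mul_assoc] using this
  intro r hr
  rw [of_rows_eq, ← hc, isUnit_fin_two_iff_of_unit_bottom_left, mul_assoc] at hr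
  exact hdistant _ (isUnit_of_isUnit_sub_mul hy hr)

theorem RowParallel.symm {v w : Fin 2 → R} (hv : AdmissibleRow v) (h : RowParallel v w) :
    RowParallel w v := by
  obtain ⟨v', G, hG⟩ := hv
  have hGv : ![1, 0] ᵥ* (G : Matrix (Fin 2) (Fin 2) R) = v := by
    rw [hG]
    ext j
    simp
  have h' := h.vecMul G⁻¹
  rw [← hGv, vecMul_vecMul, Units.mul_inv, vecMul_one] at h'
  simpa [hGv, vecMul_vecMul] using h'.symm_of_left_eq_one_zero.vecMul G

end

theorem radParallel_equivalence_general (R : Type*) [Ring R] :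
    (∀ p ∈ ProjLine R, RadParallel p p) ∧
    (∀ p ∈ ProjLine R, ∀ q ∈ ProjLine R, RadParallel p q → RadParallel q p) ∧
    (∀ p ∈ ProjLine R, ∀ q ∈ ProjLine R, ∀ r ∈ ProjLine R,
      RadParallel p q → RadParallel q r → RadParallel p r) := by
  refine ⟨fun p _ x _ hx ↦ hx, ?_, fun p _ q _ r _ hpq hqr x hx hxp ↦ hqr x hx (hpq x hx hxp)⟩
  intro p hp q hq h
  obtain ⟨v, hv, rfl⟩ := mem_projLine_iff.mp hp
  obtain ⟨w, hw, rfl⟩ := mem_projLine_iff.mp hq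
  rw [radParallel_span_iff hv hw] at h
  exact (radParallel_span_iff hw hv).mpr (h.symm hv)

/-- Radical parallelism on the projective line is an equivalence relation:
reflexive, symmetric, and transitive. -/
theorem radParallel_equivalence (R : Type*) [Ring R] [Nontrivial R] :
    (∀ p ∈ ProjLine R, RadParallel p p) ∧
    (∀ p ∈ ProjLine R, ∀ q ∈ ProjLine R, RadParallel p q → RadParallel q p) ∧
    (∀ p ∈ ProjLine R, ∀ q ∈ ProjLine R, ∀ r ∈ ProjLine R,
      RadParallel p q → RadParallel q r → RadParallel p r) :=
  radParallel_equivalence_general R
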